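/- Let R be a commutative Noetherian local ring and I an ideal of R generated by a regular sequence of length m. Then the projective dimension of R/I as an R-module equals m. -/

import Mathlib

/-!
The projective dimension of `R ⧸ (x₁, …, xₘ)` in the sense of `Ext` is `m`: each regular element,
lying in the maximal ideal, raises it by exactly one (Nakayama applied to `Ext`); this is
`ModuleCat.projectiveDimension_quotient_eq_length`. It remains to see that a projective resolution
of length `≤ n` exists iff `Ext^i(M, -) = 0` for `i > n`. One way, every class in `Ext^i(M, N)` is
represented by a map `Pᵢ ⟶ N`. The other way, by induction on `n`: if `0 → K → P → M → 0` with
`P` projective and `M` of projective dimension `≤ n + 1`, then `K` has projective dimension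
`≤ n`, and a resolution of `K` of length `≤ n` spliced onto `P → M` resolves `M`.
-/
open CategoryTheory

/-- `M` has a projective resolution of length at most `n`. -/
def HasProjDimLE (R : Type) [Ring R] (M : ModuleCat R) (n : ℕ) : Prop :=
  ∃ P : ProjectiveResolution M, ∀ i, n < i → Limits.IsZero (P.complex.X i)

/-- The projective dimension of `M` is exactly `n`. -/
def HasProjDimEq (R : Type) [Ring R] (M : ModuleCat R) (n : ℕ) : Prop :=
  HasProjDimLE R M n ∧ ∀ k, k < n → ¬ HasProjDimLE R M k

open Limits

namespace CategoryTheory.ProjectiveResolution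

variable {C : Type*} [Category C] [Abelian C]

lemma hasProjectiveDimensionLE {X : C} (P : ProjectiveResolution X) (n : ℕ)
    (hP : ∀ i, n < i → IsZero (P.complex.X i)) : HasProjectiveDimensionLE X n := by
  let := HasExt.standard C
  refine HasProjectiveDimensionLT.mk fun i hi Y e => ?_
  obtain ⟨f, hf, rfl⟩ := P.extMk_surjective e (i + 1) rfl
  obtain rfl : f = 0 := (hP i hi).eq_of_src _ _
  exact P.extMk_zero _ _

section Splice

variable {S : ShortComplex C} (hS : S.ShortExact) (Q : ProjectiveResolution S.X₁)

noncomputable def spliceComplex : ChainComplex C ℕ :=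
  Q.complex.augment (Q.π.f 0 ≫ S.f) ((Q.complex_d_comp_π_f_zero_assoc S.f).trans zero_comp)

lemma spliceComplex_d_comp_g : (spliceComplex Q).d 1 0 ≫ S.g = 0 :=
  (Category.assoc _ _ _).trans ((congrArg (Q.π.f 0 ≫ ·) S.zero).trans comp_zero)

include hS in
lemma exact_spliceComplex_zero :
    (ShortComplex.mk _ _ (spliceComplex_d_comp_g Q)).Exact := by
  -- precomposing `S.f` with the epimorphism `Q.π.f 0` does not affect exactness
  let α : ShortComplex.mk _ _ (spliceComplex_d_comp_g Q) ⟶ S :=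
    { τ₁ := Q.π.f 0, τ₂ := 𝟙 _, τ₃ := 𝟙 _, comm₁₂ := (Category.comp_id _).symm,
      comm₂₃ := (Category.id_comp _).trans (Category.comp_id _).symm }
  have : Epi α.τ₁ := inferInstanceAs (Epi (Q.π.f 0))
  have : IsIso α.τ₂ := inferInstanceAs (IsIso (𝟙 S.X₂))
  have : Mono α.τ₃ := inferInstanceAs (Mono (𝟙 S.X₃))
  rw [ShortComplex.exact_iff_of_epi_of_isIso_of_mono α]
  exact hS.exact

include hS in
lemma spliceComplex_exactAt_succ (n : ℕ) : (spliceComplex Q).ExactAt (n + 1) := by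
  rw [HomologicalComplex.exactAt_iff' _ (n + 2) (n + 1) n (by simp) (by simp)]
  cases n with
  | zero =>
    -- postcomposing `Q.π.f 0` with the monomorphism `S.f` does not affect exactness
    let α : ShortComplex.mk _ _ Q.complex_d_comp_π_f_zero ⟶ (spliceComplex Q).sc' 2 1 0 :=
      { τ₁ := 𝟙 _, τ₂ := 𝟙 _, τ₃ := S.f,
        comm₁₂ := (Category.id_comp _).trans (Category.comp_id _).symm,
        comm₂₃ := Category.id_comp _ }
    have : Epi α.τ₁ := inferInstanceAs (Epi (𝟙 (Q.complex.X 1)))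
    have : IsIso α.τ₂ := inferInstanceAs (IsIso (𝟙 (Q.complex.X 0)))
    have : Mono α.τ₃ := hS.mono_f
    rw [← ShortComplex.exact_iff_of_epi_of_isIso_of_mono α]
    exact Q.exact₀
  | succ n => exact Q.exact_succ n

noncomputable def splice [Projective S.X₂] : ProjectiveResolution S.X₃ where
  complex := spliceComplex Q
  projective
    | 0 => ‹Projective S.X₂›
    | n + 1 => Q.projective n
  π := (ChainComplex.toSingle₀Equiv _ _).symm ⟨S.g, spliceComplex_d_comp_g Q⟩
  quasiIso := ⟨fun n => by
    cases n with
    | zero =>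
      rw [ChainComplex.quasiIsoAt₀_iff, ShortComplex.quasiIso_iff_of_zeros']
      · refine (ShortComplex.exact_and_epi_g_iff_of_iso ?_).2
          ⟨exact_spliceComplex_zero hS Q, hS.epi_g⟩
        exact ShortComplex.isoMk (Iso.refl _) (Iso.refl _) (Iso.refl _)
          ((Category.id_comp _).trans (Category.comp_id _).symm)
          ((Category.id_comp _).trans
            ((ChainComplex.toSingle₀Equiv_symm_apply_f_zero (C := spliceComplex Q) S.g
              (spliceComplex_d_comp_g Q)).symm.trans (Category.comp_id _).symm))
      all_goals rfl
    | succ n =>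
      rw [quasiIsoAt_iff_exactAt']
      · exact spliceComplex_exactAt_succ hS Q n
      · exact ChainComplex.exactAt_succ_single_obj _ _⟩

end Splice

theorem exists_of_hasProjectiveDimensionLE [EnoughProjectives C] (X : C) (n : ℕ)
    [HasProjectiveDimensionLE X n] :
    ∃ P : ProjectiveResolution X, ∀ i, n < i → IsZero (P.complex.X i) := by
  induction n generalizing X with
  | zero =>
    have : Projective X := (projective_iff_hasProjectiveDimensionLE_zero X).2 ‹_›
    exact ⟨self X, fun i hi => HomologicalComplex.isZero_single_obj_X _ _ _ _ hi.ne'⟩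
  | succ n ih =>
    let S := ShortComplex.mk (kernel.ι (Projective.π X)) (Projective.π X) (kernel.condition _)
    have hS : S.ShortExact := { exact := S.exact_of_f_is_kernel (kernelIsKernel _) }
    have : HasProjectiveDimensionLE S.X₁ n :=
      (hS.hasProjectiveDimensionLT_X₃_iff n (Projective.projective_over X)).1 ‹_›
    obtain ⟨Q, hQ⟩ := ih S.X₁
    exact ⟨splice hS Q, fun | i + 1, hi => hQ i (by omega)⟩

end CategoryTheory.ProjectiveResolution

lemma hasProjDimLE_iff {R : Type} [Ring R] {M : ModuleCat R} {n : ℕ} :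
    HasProjDimLE R M n ↔ HasProjectiveDimensionLE M n :=
  ⟨fun ⟨P, hP⟩ => P.hasProjectiveDimensionLE n hP,
    fun _ => ProjectiveResolution.exists_of_hasProjectiveDimensionLE M n⟩

lemma hasProjDimEq_of_projectiveDimension_eq {R : Type} [Ring R] {M : ModuleCat R} {n : ℕ}
    (h : projectiveDimension M = n) : HasProjDimEq R M n := by
  simp only [HasProjDimEq, hasProjDimLE_iff, ← projectiveDimension_le_iff, h]
  exact ⟨le_rfl, fun k hk => by exact_mod_cast hk.not_ge⟩

/-- If `R` is a commutative Noetherian local ring and `I` is an ideal generated by a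
regular sequence of length `m`, then the projective dimension of `R ⧸ I` over `R` is `m`. -/
theorem projDim_quotient_regular_sequence
    (R : Type) [CommRing R] [IsNoetherianRing R] [IsLocalRing R]
    (I : Ideal R) (m : ℕ) (rs : List R)
    (hreg : RingTheory.Sequence.IsRegular R rs)
    (hgen : Ideal.ofList rs = I) (hlen : rs.length = m) :
    HasProjDimEq R (ModuleCat.of R (R ⧸ I)) m := by
  subst hgen hlen
  apply hasProjDimEq_of_projectiveDimension_eq
  rw [← ModuleCat.projectiveDimension_quotient_eq_length rs hreg]
  exact projectiveDimension_eq_of_iso (Shrink.linearEquiv R _).symm.toModuleIso
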